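/- arXiv:2307.14002 — 4 statements merged into one kernel-verified Lean document; each statement's English description precedes it below -/
import Mathlib

section
/- The path probability of a positive excursion factorizes through its level numbers: for any positive excursion x, Π_{n=0}^{θ(x)-1} p(x_n, x_{n+1}) = Π_{h=0}^{H(x)-1} (p_h q_{h+1})^{N_h(x)}, where p(k,k+1) = p_k and p(k,k-1) = q_k. -/
/-! Each step of the walk traverses one edge `{h, h+1}` with `0 ≤ h < H`, contributing `p h` if it
goes up and `q (h+1)` if it goes down. Since the excursion returns to its starting point, every
edge is crossed downwards exactly as often as upwards, namely `N_h` times. -/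

/-- `x` restricted to `[0,θ]` is a positive excursion: starts and ends at `0`,
is strictly positive in the interior, and has jumps `±1`. -/
def IsPosExc (x : ℕ → ℤ) (θ : ℕ) : Prop :=
  x 0 = 0 ∧ x θ = 0 ∧ (∀ n, 0 < n → n < θ → 0 < x n) ∧
    (∀ n, n < θ → x (n + 1) - x n = 1 ∨ x (n + 1) - x n = -1)

/-- `x` restricted to `[0,θ]` is a negative excursion. -/
def IsNegExc (x : ℕ → ℤ) (θ : ℕ) : Prop :=
  x 0 = 0 ∧ x θ = 0 ∧ (∀ n, 0 < n → n < θ → x n < 0) ∧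
    (∀ n, n < θ → x (n + 1) - x n = 1 ∨ x (n + 1) - x n = -1)

/-- Number of individuals of the excursion `x` (of length `θ`) born at level `h`,
i.e. number of up-steps from `h` to `h+1`. -/
def levelCount (x : ℕ → ℤ) (θ : ℕ) (h : ℤ) : ℕ :=
  ((Finset.range θ).filter (fun n => x n = h ∧ x (n + 1) = x n + 1)).card

/-- For negative excursions: number of individuals born at level `h`,
i.e. number of down-steps from `h` to `h-1`. -/
def levelCountDown (x : ℕ → ℤ) (θ : ℕ) (h : ℤ) : ℕ :=
  ((Finset.range θ).filter (fun n => x n = h ∧ x (n + 1) = x n - 1)).card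

/-- `(b,t)` is (the birth/death time pair of) an individual of the excursion `x`:
born at time `b` at level `x b`, with an up-step at `b`, dying at the first
return time `t` to its birth level. -/
def IsIndividual (x : ℕ → ℤ) (θ b t : ℕ) : Prop :=
  b < t ∧ t ≤ θ ∧ x (b + 1) = x b + 1 ∧ x t = x b ∧
    ∀ n, b < n → n < t → x n ≠ x b


theorem levelCount_eq_levelCountDown_add_one {x : ℕ → ℤ} {θ : ℕ}
    (hstep : ∀ n < θ, x (n + 1) - x n = 1 ∨ x (n + 1) - x n = -1)
    (hloop : x θ = x 0) (h : ℤ) :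
    levelCount x θ h = levelCountDown x θ (h + 1) := by
  -- the indicator of `h < x n` telescopes: it jumps exactly at the crossings of `{h, h+1}`
  have hcross : ∀ n ∈ Finset.range θ,
      ((if x n = h ∧ x (n + 1) = x n + 1 then (1 : ℤ) else 0)
        - if x n = h + 1 ∧ x (n + 1) = x n - 1 then 1 else 0)
        = (if h < x (n + 1) then 1 else 0) - if h < x n then 1 else 0 := by
    intro n hn
    rcases hstep n (Finset.mem_range.1 hn) with hs | hs <;> split_ifs <;> omega
  have hbalance : ∑ n ∈ Finset.range θ,
      ((if x n = h ∧ x (n + 1) = x n + 1 then (1 : ℤ) else 0)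
        - if x n = h + 1 ∧ x (n + 1) = x n - 1 then 1 else 0) = 0 := by
    rw [Finset.sum_congr rfl hcross, Finset.sum_range_sub (fun n => if h < x n then (1 : ℤ) else 0),
      hloop, sub_self]
  rw [Finset.sum_sub_distrib, sub_eq_zero, Finset.sum_boole, Finset.sum_boole] at hbalance
  exact_mod_cast hbalance

theorem filter_min_step_eq_union {x : ℕ → ℤ} {θ : ℕ}
    (hstep : ∀ n < θ, x (n + 1) - x n = 1 ∨ x (n + 1) - x n = -1) (h : ℤ) :
    (Finset.range θ).filter (fun n => min (x n) (x (n + 1)) = h) =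
      (Finset.range θ).filter (fun n => x n = h ∧ x (n + 1) = x n + 1) ∪
        (Finset.range θ).filter (fun n => x n = h + 1 ∧ x (n + 1) = x n - 1) := by
  rw [← Finset.filter_or]
  refine Finset.filter_congr fun n hn => ?_
  rcases hstep n (Finset.mem_range.1 hn) with hs | hs <;> omega

theorem prod_step_weights_eq_prod_levels {M : Type*} [CommMonoid M] (p q : ℤ → M)
    {x : ℕ → ℤ} {θ : ℕ} (hstep : ∀ n < θ, x (n + 1) - x n = 1 ∨ x (n + 1) - x n = -1)
    {s : Finset ℤ} (hs : ∀ n < θ, min (x n) (x (n + 1)) ∈ s) :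
    ∏ n ∈ Finset.range θ, (if x (n + 1) = x n + 1 then p (x n) else q (x n)) =
      ∏ h ∈ s, p h ^ levelCount x θ h * q (h + 1) ^ levelCountDown x θ (h + 1) := by
  rw [← Finset.prod_fiberwise_of_maps_to (g := fun n => min (x n) (x (n + 1)))
    fun n hn => hs n (Finset.mem_range.1 hn)]
  refine Finset.prod_congr rfl fun h _ => ?_
  have hdisj : Disjoint ((Finset.range θ).filter (fun n => x n = h ∧ x (n + 1) = x n + 1))
      ((Finset.range θ).filter (fun n => x n = h + 1 ∧ x (n + 1) = x n - 1)) :=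
    Finset.disjoint_filter.2 fun n _ hup hdown => by omega
  rw [filter_min_step_eq_union hstep, Finset.prod_union hdisj, levelCount, levelCountDown,
    ← Finset.prod_const, ← Finset.prod_const]
  congr 1 <;> refine Finset.prod_congr rfl fun n hn => ?_ <;> rw [Finset.mem_filter] at hn
  · rw [if_pos hn.2.2, hn.2.1]
  · rw [if_neg (by omega), hn.2.1]

theorem IsPosExc.nonneg {x : ℕ → ℤ} {θ : ℕ} (hx : IsPosExc x θ) {n : ℕ} (hn : n ≤ θ) :
    0 ≤ x n := by
  obtain ⟨h0, hθ, hpos, -⟩ := hx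
  rcases Nat.eq_zero_or_pos n with rfl | hn0
  · exact h0.ge
  rcases hn.lt_or_eq with hlt | rfl
  · exact (hpos n hn0 hlt).le
  · exact hθ.ge

theorem IsPosExc.min_step_mem_range {x : ℕ → ℤ} {θ H : ℕ} (hx : IsPosExc x θ)
    (hH : IsGreatest {v : ℤ | ∃ n ≤ θ, x n = v} (H : ℤ)) (n : ℕ) (hn : n < θ) :
    min (x n) (x (n + 1)) ∈ (Finset.range H).map Nat.castEmbedding := by
  have h0 := hx.nonneg hn.le
  have h1 := hx.nonneg (n := n + 1) hn
  have hH0 := hH.2 ⟨n, hn.le, rfl⟩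
  have hH1 := hH.2 ⟨n + 1, hn, rfl⟩
  have hs := hx.2.2.2 n hn
  refine Finset.mem_map.2 ⟨(min (x n) (x (n + 1))).toNat, Finset.mem_range.2 ?_, ?_⟩
  · omega
  · simp only [Nat.castEmbedding_apply]
    omega

/-- the path probability of a positive excursion factorizes
through its level numbers: `∏_{n<θ} p(x_n,x_{n+1}) = ∏_{h<H} (p_h q_{h+1})^{N_h}`. -/
theorem path_probability_factorizes (p q : ℤ → ℝ) (x : ℕ → ℤ) (θ H : ℕ)
    (hx : IsPosExc x θ)
    (hH : IsGreatest {v : ℤ | ∃ n ≤ θ, x n = v} (H : ℤ)) :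
    ∏ n ∈ Finset.range θ, (if x (n + 1) = x n + 1 then p (x n) else q (x n)) =
      ∏ h ∈ Finset.range H, (p (h : ℤ) * q ((h : ℤ) + 1)) ^ levelCount x θ (h : ℤ) := by
  have hedges := hx.min_step_mem_range hH
  obtain ⟨h0, hθ, -, hstep⟩ := hx
  rw [prod_step_weights_eq_prod_levels p q hstep hedges, Finset.prod_map]
  refine Finset.prod_congr rfl fun h _ => ?_
  rw [Nat.castEmbedding_apply,
    ← levelCount_eq_levelCountDown_add_one hstep (hθ.trans h0.symm), mul_pow]
end

section
/- For every sequence of level numbers N with N_0 = 1, N_h > 0 for h < H, N_h = 0 for h ≥ H, and finite total sum, there exists a positive excursion x with N(x) = N; in particular X⁺(N) is nonempty. -/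
def walk (s : List ℤ) (n : ℕ) : ℤ := (s.take n).sum

@[simp] lemma walk_zero (s : List ℤ) : walk s 0 = 0 := by simp [walk]

@[simp] lemma walk_cons_succ (a : ℤ) (s : List ℤ) (n : ℕ) :
    walk (a :: s) (n + 1) = a + walk s n := by
  simp [walk]

lemma walk_append (s t : List ℤ) (n : ℕ) :
    walk (s ++ t) n = walk s n + walk t (n - s.length) := by
  simp [walk, List.take_append]

lemma walk_length (s : List ℤ) : walk s s.length = s.sum := by simp [walk]

lemma walk_succ_sub_walk (s : List ℤ) {n : ℕ} (hn : n < s.length) :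
    walk s (n + 1) - walk s n = s[n] := by
  rw [walk, walk, List.sum_take_succ _ _ hn, add_sub_cancel_left]

lemma walk_step_eq_one_or_neg_one {s : List ℤ} (hs : ∀ a ∈ s, a = 1 ∨ a = -1) {n : ℕ}
    (hn : n < s.length) : walk s (n + 1) - walk s n = 1 ∨ walk s (n + 1) - walk s n = -1 :=
  walk_succ_sub_walk s hn ▸ hs _ (List.getElem_mem hn)

lemma isPosExc_walk_nest {s : List ℤ} (hs : ∀ n, 0 ≤ walk s n)
    (hstep : ∀ a ∈ s, a = 1 ∨ a = -1) (hsum : s.sum = 0) :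
    IsPosExc (walk (1 :: s ++ [-1])) (s.length + 2) := by
  refine ⟨rfl, ?_, ?_, ?_⟩
  · have hlen : s.length + 2 = (1 :: s ++ [-1]).length := by simp
    rw [hlen, walk_length]
    simp [hsum]
  · rintro (_ | n) hn hlt
    · omega
    · have hlast : walk [-1] (n - s.length) = 0 := by rw [show n - s.length = 0 by omega]; rfl
      rw [List.cons_append, walk_cons_succ, walk_append, hlast]
      linarith [hs n]
  · intro n hn
    exact walk_step_eq_one_or_neg_one (by simpa [or_imp, forall_and] using hstep) (by simp; omega)

def upCount (s : List ℤ) (g : ℤ) : ℕ := levelCount (walk s) s.length g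

@[simp] lemma upCount_nil (g : ℤ) : upCount [] g = 0 := rfl

lemma upCount_cons (a : ℤ) (s : List ℤ) (g : ℤ) :
    upCount (a :: s) g = (if a = 1 ∧ g = 0 then 1 else 0) + upCount s (g - a) := by
  simp only [upCount, levelCount, Finset.card_filter, List.length_cons,
    Finset.sum_range_succ', walk_cons_succ, walk_zero, zero_add]
  rw [add_comm]
  congr 1
  · exact if_congr (by omega) rfl rfl
  · exact Finset.sum_congr rfl fun n _ ↦ if_congr (by omega) rfl rfl

lemma upCount_append (s t : List ℤ) (g : ℤ) :
    upCount (s ++ t) g = upCount s g + upCount t (g - s.sum) := by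
  induction s generalizing g with
  | nil => simp
  | cons a s ih =>
    rw [List.cons_append, upCount_cons, upCount_cons, ih, List.sum_cons, sub_sub, add_assoc]

lemma upCount_eq_zero_of_neg {s : List ℤ} (hs : ∀ n, 0 ≤ walk s n) {g : ℤ} (hg : g < 0) :
    upCount s g = 0 := by
  simp only [upCount, levelCount, Finset.card_eq_zero, Finset.filter_eq_empty_iff]
  exact fun n _ ⟨hn, _⟩ ↦ by linarith [hs n]

def zigzag : ℕ → List ℤ
  | 0 => []
  | k + 1 => 1 :: -1 :: zigzag k

@[simp] lemma zigzag_sum (k : ℕ) : (zigzag k).sum = 0 := by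
  induction k with
  | zero => rfl
  | succ k ih => simp [zigzag, ih]

@[simp] lemma zigzag_length (k : ℕ) : (zigzag k).length = 2 * k := by
  induction k with
  | zero => rfl
  | succ k ih => simp [zigzag, ih]; ring

lemma walk_zigzag_nonneg (k n : ℕ) : 0 ≤ walk (zigzag k) n := by
  induction k generalizing n with
  | zero => simp [zigzag, walk]
  | succ k ih =>
    match n with
    | 0 => simp
    | 1 => simp [zigzag]
    | n + 2 => simpa [zigzag] using ih n

lemma upCount_zigzag (k : ℕ) (g : ℤ) : upCount (zigzag k) g = if g = 0 then k else 0 := by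
  induction k generalizing g with
  | zero => simp [zigzag]
  | succ k ih =>
    simp only [zigzag, upCount_cons, ih]
    by_cases hg : g = 0 <;> simp [hg]
    · omega

lemma eq_one_or_neg_one_of_mem_zigzag (k : ℕ) : ∀ a ∈ zigzag k, a = 1 ∨ a = -1 := by
  induction k with
  | zero => simp [zigzag]
  | succ k ih => simpa [zigzag] using ih

def levelSteps (N : ℕ → ℕ) : ℕ → ℕ → List ℤ
  | _, 0 => []
  | h, k + 1 => 1 :: levelSteps N (h + 1) k ++ -1 :: zigzag (N h - 1)

section levelSteps

variable (N : ℕ → ℕ)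

@[simp] lemma levelSteps_sum (h k : ℕ) : (levelSteps N h k).sum = 0 := by
  induction k generalizing h with
  | zero => rfl
  | succ k ih => simp [levelSteps, ih]

lemma levelSteps_length {h k : ℕ} (hpos : ∀ i, h ≤ i → i < h + k → 0 < N i) :
    (levelSteps N h k).length = 2 * ∑ i ∈ Finset.Ico h (h + k), N i := by
  induction k generalizing h with
  | zero => simp [levelSteps]
  | succ k ih =>
    have hN := hpos h le_rfl (by omega)
    have ih' := ih (h := h + 1) fun i hi hi' ↦ hpos i (by omega) (by omega)
    rw [levelSteps, Finset.sum_eq_sum_Ico_succ_bot (by omega),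
      show h + (k + 1) = h + 1 + k by omega]
    simp only [List.length_cons, List.length_append, zigzag_length, ih']
    omega

lemma walk_levelSteps_nonneg (h k n : ℕ) : 0 ≤ walk (levelSteps N h k) n := by
  induction k generalizing h n with
  | zero => simp [levelSteps, walk]
  | succ k ih =>
    cases n with
    | zero => simp
    | succ n =>
      rw [levelSteps, List.cons_append, walk_cons_succ, walk_append]
      have hdown : -1 ≤ walk (-1 :: zigzag (N h - 1)) (n - (levelSteps N (h + 1) k).length) := by
        cases n - (levelSteps N (h + 1) k).length with
        | zero => simp
        | succ m => simpa using walk_zigzag_nonneg (N h - 1) m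
      linarith [ih (h + 1) n]

lemma eq_one_or_neg_one_of_mem_levelSteps (h k : ℕ) :
    ∀ a ∈ levelSteps N h k, a = 1 ∨ a = -1 := by
  induction k generalizing h with
  | zero => simp [levelSteps]
  | succ k ih =>
    simp only [levelSteps, List.cons_append, List.mem_cons, List.mem_append]
    rintro a (rfl | ha | rfl | ha)
    · simp
    · exact ih _ a ha
    · simp
    · exact eq_one_or_neg_one_of_mem_zigzag _ a ha

lemma upCount_levelSteps {h k : ℕ} (hpos : ∀ i, h ≤ i → i < h + k → 0 < N i) (g : ℕ) :
    upCount (levelSteps N h k) g = if g < k then N (h + g) else 0 := by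
  induction k generalizing h g with
  | zero => simp [levelSteps]
  | succ k ih =>
    have hN := hpos h le_rfl (by omega)
    have hpos' : ∀ i, h + 1 ≤ i → i < h + 1 + k → 0 < N i :=
      fun i hi hi' ↦ hpos i (by omega) (by omega)
    rw [levelSteps, List.cons_append, upCount_cons, upCount_append, upCount_cons,
      upCount_zigzag, levelSteps_sum]
    cases g with
    | zero =>
      rw [upCount_eq_zero_of_neg (walk_levelSteps_nonneg N _ _) (by norm_num)]
      simp; omega
    | succ g =>
      rw [show ((g + 1 : ℕ) : ℤ) - 1 = g by push_cast; ring, ih hpos']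
      simp [add_right_comm, add_assoc, show (g : ℤ) + 1 ≠ 0 by omega]

lemma isPosExc_walk_levelSteps {h : ℕ} (hN : N h = 1) (k : ℕ) :
    IsPosExc (walk (levelSteps N h (k + 1))) (levelSteps N h (k + 1)).length := by
  have hsteps : levelSteps N h (k + 1) = 1 :: levelSteps N (h + 1) k ++ [-1] := by
    simp [levelSteps, hN, zigzag]
  rw [hsteps]
  convert isPosExc_walk_nest (walk_levelSteps_nonneg N _ _)
    (eq_one_or_neg_one_of_mem_levelSteps N _ _) (levelSteps_sum N _ _) using 1
  simp

end levelSteps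

/-- for any admissible sequence of level numbers there is a
positive excursion realizing it. -/
theorem exists_excursion_with_level_numbers (N : ℕ → ℕ) (H : ℕ)
    (h0 : N 0 = 1) (hH : 1 ≤ H) (hpos : ∀ h, h < H → 0 < N h)
    (hzero : ∀ h, H ≤ h → N h = 0) :
    ∃ x : ℕ → ℤ, IsPosExc x (2 * ∑ h ∈ Finset.range H, N h) ∧
      ∀ h : ℕ, levelCount x (2 * ∑ h ∈ Finset.range H, N h) (h : ℤ) = N h := by
  have hpos' : ∀ i, 0 ≤ i → i < 0 + H → 0 < N i := fun i _ hi ↦ hpos i (by omega)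
  have hlen : (levelSteps N 0 H).length = 2 * ∑ h ∈ Finset.range H, N h := by
    rw [levelSteps_length N hpos', zero_add, Finset.range_eq_Ico]
  obtain ⟨K, rfl⟩ := Nat.exists_eq_add_of_le' hH
  refine ⟨walk (levelSteps N 0 (K + 1)), hlen ▸ isPosExc_walk_levelSteps N h0 K, fun h ↦ ?_⟩
  rw [← hlen]
  change upCount _ h = N h
  rw [upCount_levelSteps N hpos', zero_add]
  split_ifs with hh
  · rfl
  · exact (hzero h (by omega)).symm
end

section
/- Let x be a positive excursion of length θ attaining its height H(x) at a unique coordinate m. Define the Vervaat transform V(x) by V(x)_n = x_{n+m} - H(x) for 0 ≤ n ≤ θ - m and V(x)_n = x_{n+m-θ} - H(x) for θ - m + 1 ≤ n ≤ θ. Then V(x) is a negative excursion of length θ with height -H(x), attained at the unique coordinate θ - m. -/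
/-- the Vervaat transform of a positive excursion attaining its
height `H` at the unique coordinate `m` is a negative excursion of the same
length, of height `-H` attained at the unique coordinate `θ - m`. -/
theorem vervaat_is_negative_excursion (x v : ℕ → ℤ) (θ m : ℕ) (H : ℤ)
    (hx : IsPosExc x θ) (hm : 0 < m) (hmθ : m < θ) (hxm : x m = H)
    (hmax : ∀ n ≤ θ, x n ≤ H) (huniq : ∀ n ≤ θ, x n = H → n = m)
    (hv : ∀ n, v n = if n ≤ θ - m then x (n + m) - H else x (n + m - θ) - H) :
    IsNegExc v θ ∧ v (θ - m) = -H ∧ (∀ n ≤ θ, -H ≤ v n) ∧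
      ∀ n ≤ θ, v n = -H → n = θ - m := by
  obtain ⟨hx0, hxθ, hxpos, hxjump⟩ := hx
  have hxnn : ∀ k ≤ θ, 0 ≤ x k := by
    intro k hk
    rcases Nat.eq_zero_or_pos k with h | h
    · simp [h, hx0]
    rcases eq_or_lt_of_le hk with h' | h'
    · simp [h', hxθ]
    · exact le_of_lt (hxpos k h h')
  have hv0 : v 0 = 0 := by
    rw [hv 0, if_pos (Nat.zero_le _)]
    simp [hxm]
  have hvθ : v θ = 0 := by
    rw [hv θ, if_neg (by omega)]
    have e : θ + m - θ = m := by omega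
    rw [e, hxm]; ring
  have hvθm : v (θ - m) = -H := by
    rw [hv (θ - m), if_pos le_rfl]
    have e : θ - m + m = θ := by omega
    rw [e, hxθ]; ring
  have hvneg : ∀ n, 0 < n → n < θ → v n < 0 := by
    intro n hn hnθ
    rw [hv n]
    by_cases h : n ≤ θ - m
    · rw [if_pos h]
      have h1 : n + m ≤ θ := by omega
      have h2 : x (n + m) ≤ H := hmax _ h1
      have h3 : x (n + m) ≠ H := fun he => by have := huniq _ h1 he; omega
      omega
    · rw [if_neg h]
      have h1 : n + m - θ ≤ θ := by omega
      have h2 : x (n + m - θ) ≤ H := hmax _ h1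
      have h3 : x (n + m - θ) ≠ H := fun he => by have := huniq _ h1 he; omega
      omega
  have hvjump : ∀ n, n < θ → v (n + 1) - v n = 1 ∨ v (n + 1) - v n = -1 := by
    intro n hn
    rw [hv (n + 1), hv n]
    by_cases h1 : n + 1 ≤ θ - m
    · rw [if_pos h1, if_pos (by omega)]
      have e : n + 1 + m = n + m + 1 := by omega
      rw [e]
      have := hxjump (n + m) (by omega)
      omega
    · by_cases h2 : n ≤ θ - m
      · -- n = θ - m
        rw [if_neg h1, if_pos h2]
        have e1 : n + 1 + m - θ = 1 := by omega
        have e2 : n + m = θ := by omega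
        rw [e1, e2, hxθ]
        have := hxjump 0 (by omega)
        simp only [Nat.zero_add, hx0] at this
        omega
      · rw [if_neg h1, if_neg h2]
        have e : n + 1 + m - θ = (n + m - θ) + 1 := by omega
        rw [e]
        have := hxjump (n + m - θ) (by omega)
        omega
  refine ⟨⟨hv0, hvθ, hvneg, hvjump⟩, hvθm, ?_, ?_⟩
  · intro n hn
    rw [hv n]
    by_cases h : n ≤ θ - m
    · rw [if_pos h]
      have := hxnn (n + m) (by omega)
      omega
    · rw [if_neg h]
      have := hxnn (n + m - θ) (by omega)
      omega
  · intro n hn he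
    rw [hv n] at he
    by_cases h : n ≤ θ - m
    · rw [if_pos h] at he
      have h0 : x (n + m) = 0 := by omega
      by_contra hne
      have : 0 < x (n + m) := hxpos _ (by omega) (by omega)
      omega
    · rw [if_neg h] at he
      have h0 : x (n + m - θ) = 0 := by omega
      have : 0 < x (n + m - θ) := hxpos _ (by omega) (by omega)
      omega
end

section
/- Let x be a positive excursion, k ∈ (0,θ(x)) a coordinate, and define x' by x'_n = x_{n+k} - x_k for 0 ≤ n ≤ θ - k and x'_n = x_{n+k-θ} - x_k for θ - k + 1 ≤ n ≤ θ. Then x' is a negative excursion if and only if x attains its height at the unique coordinate k. -/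
/-- the cyclic shift of a positive excursion at a coordinate
`k ∈ (0,θ)` is a negative excursion iff the height of `x` is attained at the
unique coordinate `k`. -/
theorem shift_negative_iff_unique_max (x : ℕ → ℤ) (θ k : ℕ)
    (hx : IsPosExc x θ) (hk0 : 0 < k) (hkθ : k < θ) :
    IsNegExc (fun n => if n ≤ θ - k then x (n + k) - x k
        else x (n + k - θ) - x k) θ ↔
      ((∀ n ≤ θ, x n ≤ x k) ∧ ∀ n ≤ θ, x n = x k → n = k) := by
  obtain ⟨h0, hθ, hpos, hstep⟩ := hx
  have hxk : 0 < x k := hpos k hk0 hkθ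
  constructor
  · rintro ⟨y0, yθ, yneg, ystep⟩
    have key : ∀ n ≤ θ, n ≠ k → x n < x k := by
      intro n hn hnk
      rcases lt_or_ge n k with h | h
      · rcases Nat.eq_zero_or_pos n with rfl | hn0
        · rw [h0]; exact hxk
        · have := yneg (n + θ - k) (by omega) (by omega)
          simp only [not_le.mpr (show θ - k < n + θ - k by omega), if_false] at this
          rw [show n + θ - k + k - θ = n by omega] at this
          linarith
      · have hk : k < n := lt_of_le_of_ne h (Ne.symm hnk)
        have := yneg (n - k) (by omega) (by omega)
        simp only [if_pos (show n - k ≤ θ - k by omega)] at this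
        rw [show n - k + k = n by omega] at this
        linarith
    constructor
    · intro n hn
      rcases eq_or_ne n k with rfl | hnk
      · exact le_refl _
      · exact (key n hn hnk).le
    · intro n hn hxn
      by_contra hnk
      exact absurd hxn (key n hn hnk).ne
  · rintro ⟨hmax, huniq⟩
    have key : ∀ n ≤ θ, n ≠ k → x n < x k := fun n hn hnk =>
      lt_of_le_of_ne (hmax n hn) (fun h => hnk (huniq n hn h))
    refine ⟨?_, ?_, ?_, ?_⟩
    · simp
    · simp only [not_le.mpr (show θ - k < θ by omega), if_false]
      rw [show θ + k - θ = k by omega]; ring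
    · intro m hm0 hmθ
      rcases le_or_gt m (θ - k) with h | h
      · simp only [if_pos h]
        have := key (m + k) (by omega) (by omega)
        linarith
      · simp only [not_le.mpr h, if_false]
        have := key (m + k - θ) (by omega) (by omega)
        linarith
    · intro n hn
      simp only
      rcases lt_trichotomy n (θ - k) with h | h | h
      · rw [if_pos (by omega : n + 1 ≤ θ - k), if_pos h.le]
        have := hstep (n + k) (by omega)
        rw [show n + 1 + k = n + k + 1 by ring]
        omega
      · rw [if_neg (by omega), if_pos (by omega : n ≤ θ - k)]
        rw [show n + 1 + k - θ = 1 by omega, show n + k = θ by omega, hθ]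
        have := hstep 0 (by omega)
        norm_num [h0] at this
        omega
      · rw [if_neg (by omega), if_neg (by omega)]
        have := hstep (n + k - θ) (by omega)
        rw [show n + 1 + k - θ = (n + k - θ) + 1 by omega]
        omega
end
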